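/- Let f₁, f₂ : [-1,1] → [-1,1] be piecewise-linear maps with f₁(0) = f₂(0) = 0, with all relevant one-sided restrictions non-constant, and suppose f₁ and f₁ ∘ f₂ have the same radial contour factor. Then for every negative radial departure ⟨x₁,x₂⟩ of f₂ and every radial departure ⟨y₁,y₂⟩ of f₁, either f₂(x₂) < y₁ < 0 < y₂ < f₂(x₁) or y₁ < f₂(x₂) < 0 < f₂(x₁) < y₂. In particular, ⟨f₂(x₂), f₂(x₁)⟩ is not a radial departure of f₁. -/

import Mathlib

open Set

/-- A positive radial departure of `f`. -/
def PosRD (f : ℝ → ℝ) (x₁ x₂ : ℝ) : Prop :=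
  -1 ≤ x₁ ∧ x₁ < 0 ∧ 0 < x₂ ∧ x₂ ≤ 1 ∧ f '' Ioo x₁ x₂ = Ioo (f x₁) (f x₂)

/-- A negative radial departure of `f`. -/
def NegRD (f : ℝ → ℝ) (x₁ x₂ : ℝ) : Prop :=
  -1 ≤ x₁ ∧ x₁ < 0 ∧ 0 < x₂ ∧ x₂ ≤ 1 ∧ f '' Ioo x₁ x₂ = Ioo (f x₂) (f x₁)

/-- A radial departure of `f` (of either orientation). -/
def RadialDeparture (f : ℝ → ℝ) (x₁ x₂ : ℝ) : Prop := PosRD f x₁ x₂ ∨ NegRD f x₁ x₂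

/-- A (right) departure of `g` (viewed as a map on `[0,1]`). -/
def Departure (g : ℝ → ℝ) (x : ℝ) : Prop := 0 < x ∧ x ≤ 1 ∧ g x ∉ g '' Ico 0 x

/-- A left departure of `g` (viewed as a map on `[-1,0]`). -/
def LeftDeparture (g : ℝ → ℝ) (x : ℝ) : Prop := -1 ≤ x ∧ x < 0 ∧ g x ∉ g '' Ioc x 0

/-- A (right) contour point of `g`: a departure `α` such that every departure past `α`
is preceded (within `(α, x]`) by a departure of orientation opposite to that of `α`. -/
def ContourPoint (g : ℝ → ℝ) (α : ℝ) : Prop :=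
  Departure g α ∧
    ∀ x, Departure g x → α < x → ∃ y, Departure g y ∧ α < y ∧ y ≤ x ∧ g α * g y < 0

/-- `[ym, yp]` is a liftable range for `t`. -/
def LiftableRange (t : ℝ → ℝ) (ym yp : ℝ) : Prop :=
  -1 ≤ ym ∧ ym ≤ 0 ∧ 0 ≤ yp ∧ yp ≤ 1 ∧
  t '' Icc ym 0 ⊆ t '' Icc 0 1 ∧
  ¬ ∃ y₁ y₂, RadialDeparture t y₁ y₂ ∧ ym ≤ y₁ ∧ yp < y₂

/-- `f` is linear (affine) on the interval `[a,b]`. -/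
def LinearOn (f : ℝ → ℝ) (a b : ℝ) : Prop :=
  ∀ x ∈ Icc a b, (b - a) * f x = (b - x) * f a + (x - a) * f b

/-- `f` is piecewise-linear on `[-1,1]`. -/
def PiecewiseLinear (f : ℝ → ℝ) : Prop :=
  ∃ n : ℕ, ∃ c : ℕ → ℝ, c 0 = -1 ∧ c n = 1 ∧ (∀ i < n, c i < c (i + 1)) ∧
    ∀ i < n, LinearOn f (c i) (c (i + 1))

/-- `t` is the contour factor of `g` (for maps on `[0,1]`): the contour points of `g`
are `0 = α₀ < α₁ < ⋯ < α_n`, `t (i/n) = g (α i)`, and `t` is linear in between. -/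
def IsContourFactor (g t : ℝ → ℝ) : Prop :=
  ∃ n : ℕ, 0 < n ∧ ∃ α : ℕ → ℝ, α 0 = 0 ∧ (∀ i < n, α i < α (i + 1)) ∧
    (∀ x, ContourPoint g x ↔ ∃ i, 1 ≤ i ∧ i ≤ n ∧ x = α i) ∧
    (∀ i ≤ n, t ((i : ℝ) / (n : ℝ)) = g (α i)) ∧
    (∀ i < n, LinearOn t ((i : ℝ) / (n : ℝ)) (((i : ℝ) + 1) / (n : ℝ)))

/-- `t` is the radial contour factor of `f`: its restriction to `[0,1]` is the contour
factor of `f|[0,1]`, and `t|[-1,0] ∘ r` is the contour factor of `f|[-1,0] ∘ r`,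
where `r x = -x`. -/
def IsRadialContourFactor (f t : ℝ → ℝ) : Prop :=
  IsContourFactor f t ∧ IsContourFactor (fun x => f (-x)) (fun x => t (-x))

/-- `f` is non-constant on each of `[0,1]` and `[-1,0]`. -/
def NonConstSides (f : ℝ → ℝ) : Prop :=
  (∃ a ∈ Icc (0:ℝ) 1, ∃ b ∈ Icc (0:ℝ) 1, f a ≠ f b) ∧
  (∃ a ∈ Icc (-1:ℝ) 0, ∃ b ∈ Icc (-1:ℝ) 0, f a ≠ f b)

lemma seq_strict {c : ℕ → ℝ} {n : ℕ} (h : ∀ i < n, c i < c (i+1)) (i j : ℕ)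
    (hij : i < j) (hjn : j ≤ n) : c i < c j := by
  revert hij hjn
  induction j with
  | zero => intro h1 _; omega
  | succ j ih =>
    intro hij hjn
    rcases Nat.lt_or_ge i j with h' | h'
    · exact lt_trans (ih h' (by omega)) (h j (by omega))
    · have hj : i = j := by omega
      subst hj; exact h i (by omega)

lemma continuousOn_union_closed {f : ℝ → ℝ} {s t : Set ℝ} (hs : IsClosed s) (ht : IsClosed t)
    (hfs : ContinuousOn f s) (hft : ContinuousOn f t) : ContinuousOn f (s ∪ t) := by
  intro x hx
  have hxs : ContinuousWithinAt f s x := by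
    rcases Classical.em (x ∈ s) with h | h
    · exact hfs x h
    · exact continuousWithinAt_of_notMem_closure (by rwa [hs.closure_eq])
  have hxt : ContinuousWithinAt f t x := by
    rcases Classical.em (x ∈ t) with h | h
    · exact hft x h
    · exact continuousWithinAt_of_notMem_closure (by rwa [ht.closure_eq])
  exact hxs.union hxt

lemma PiecewiseLinear.continuousOn {f : ℝ → ℝ} (h : PiecewiseLinear f) :
    ContinuousOn f (Icc (-1) 1) := by
  obtain ⟨n, c, hc0, hcn, hmono, hlin⟩ := h
  have key : ∀ k, k ≤ n → ContinuousOn f (Icc (c 0) (c k)) := by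
    intro k
    induction k with
    | zero => intro _; simpa [Icc_self] using continuousOn_singleton f (c 0)
    | succ k ih =>
      intro hk
      have hk' : k < n := hk
      have h1 : ContinuousOn f (Icc (c 0) (c k)) := ih (le_of_lt hk')
      have hlt : c k < c (k+1) := hmono k hk'
      have h2 : ContinuousOn f (Icc (c k) (c (k+1))) := by
        have hcont : ContinuousOn (fun x => ((c (k+1) - x) * f (c k) + (x - c k) * f (c (k+1))) / (c (k+1) - c k)) (Icc (c k) (c (k+1))) := by
          fun_prop
        refine hcont.congr ?_
        intro x hx
        have heq := hlin k hk' x hx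
        have hne : c (k+1) - c k ≠ 0 := by linarith
        field_simp
        linarith
      have hmono0 : c 0 ≤ c k := by
        rcases Nat.eq_zero_or_pos k with h0 | h0
        · subst h0; rfl
        · exact le_of_lt (seq_strict hmono 0 k h0 (le_of_lt hk'))
      have := continuousOn_union_closed isClosed_Icc isClosed_Icc h1 h2
      rwa [Icc_union_Icc_eq_Icc hmono0 (le_of_lt hlt)] at this
  have := key n le_rfl
  rwa [hc0, hcn] at this
lemma departure_neg_iff (g : ℝ → ℝ) (x : ℝ) :
    Departure (fun y => - g y) x ↔ Departure g x := by
  unfold Departure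
  constructor <;> rintro ⟨h1, h2, h3⟩ <;> refine ⟨h1, h2, fun hc => h3 ?_⟩
  · obtain ⟨w, hw, hw2⟩ := hc
    exact ⟨w, hw, by simp [hw2]⟩
  · obtain ⟨w, hw, hw2⟩ := hc
    have : g w = g x := by simpa using hw2
    exact ⟨w, hw, this⟩

lemma contourPoint_neg_iff (g : ℝ → ℝ) (x : ℝ) :
    ContourPoint (fun y => - g y) x ↔ ContourPoint g x := by
  unfold ContourPoint
  simp only [departure_neg_iff]
  constructor <;> rintro ⟨h1, h2⟩ <;> refine ⟨h1, fun z hz hxz => ?_⟩ <;>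
    obtain ⟨y, hy1, hy2, hy3, hy4⟩ := h2 z hz hxz <;>
    refine ⟨y, hy1, hy2, hy3, by nlinarith⟩

lemma IsContourFactor.neg {g t : ℝ → ℝ} (h : IsContourFactor g t) :
    IsContourFactor (fun y => - g y) (fun y => - t y) := by
  obtain ⟨n, hn, α, hα0, hmono, hcp, hval, hlin⟩ := h
  refine ⟨n, hn, α, hα0, hmono, ?_, ?_, ?_⟩
  · intro x; rw [contourPoint_neg_iff]; exact hcp x
  · intro i hi; simp [hval i hi]
  · intro i hi x hx
    have := hlin i hi x hx
    dsimp only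
    linarith

lemma segment_inside {t : ℝ → ℝ} {A B vA vB a b : ℝ} (hAB : A < B)
    (hlin : LinearOn t A B) (htA : t A = vA) (htB : t B = vB)
    (h1 : vA ∈ Ioo a b) (h2 : vB ∈ Ioo a b) : ∀ y ∈ Icc A B, t y ∈ Ioo a b := by
  intro y hy
  rcases eq_or_lt_of_le hy.1 with h | h
  · rw [← h, htA]; exact h1
  · have heq := hlin y hy
    rw [htA, htB] at heq
    obtain ⟨ha1, ha2⟩ := h1
    obtain ⟨hb1, hb2⟩ := h2
    constructor
    · nlinarith [mul_nonneg (sub_nonneg.mpr hy.2) (sub_pos.mpr ha1).le,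
        mul_pos (sub_pos.mpr h) (sub_pos.mpr hb1)]
    · nlinarith [mul_nonneg (sub_nonneg.mpr hy.2) (sub_pos.mpr ha2).le,
        mul_pos (sub_pos.mpr h) (sub_pos.mpr hb2)]

lemma segment_exit {t : ℝ → ℝ} {A B vA vB a b : ℝ} (hAB : A < B)
    (hlin : LinearOn t A B) (htA : t A = vA) (htB : t B = vB)
    (ha : a < vA) (hvab : vA < b) (hvb : b ≤ vB) :
    ∃ e', A < e' ∧ e' ≤ B ∧ t e' = b ∧ ∀ y ∈ Ico A e', t y ∈ Ioo a b := by
  have hAB' : vA < vB := lt_of_lt_of_le hvab hvb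
  have hne : vB - vA ≠ 0 := by linarith
  set q := (b - vA) / (vB - vA) with hq
  have hqk : q * (vB - vA) = b - vA := div_mul_cancel₀ _ hne
  have hq0 : 0 < q := div_pos (by linarith) (by linarith)
  have hq1 : q ≤ 1 := by rw [div_le_one (by linarith)]; linarith
  set e' := A + q * (B - A) with he'
  have he'A : A < e' := by nlinarith
  have he'B : e' ≤ B := by nlinarith
  have hteq := hlin e' ⟨le_of_lt he'A, he'B⟩
  rw [htA, htB] at hteq
  have hte' : t e' = b := by
    have hBA : B - A ≠ 0 := by linarith
    apply mul_left_cancel₀ hBA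
    nlinarith [hteq, hqk]
  refine ⟨e', he'A, he'B, hte', ?_⟩
  intro y hy
  have heqy := hlin y ⟨hy.1, le_trans (le_of_lt hy.2) he'B⟩
  rw [htA, htB] at heqy
  constructor
  · -- a < t y  (t y ≥ vA)
    nlinarith [mul_nonneg (sub_nonneg.mpr hy.1) (sub_pos.mpr hAB').le]
  · -- t y < b
    nlinarith [mul_pos (sub_pos.mpr hy.2) (sub_pos.mpr hAB'), hteq]
lemma first_max_departure {g : ℝ → ℝ} (hg : ContinuousOn g (Icc 0 1)) (hg0 : g 0 = 0)
    {r b : ℝ} (hr1 : r ≤ 1) (hb : 0 < b)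
    (hbr : ∃ x ∈ Icc 0 r, b ≤ g x) :
    ∃ xs, Departure g xs ∧ 0 < xs ∧ xs ≤ r ∧ b ≤ g xs ∧
      (∀ z ∈ Icc 0 r, g z ≤ g xs) ∧
      (∀ z, Departure g z → xs < z → g z < 0 ∨ g xs < g z) := by
  obtain ⟨x0, hx0, hbx0⟩ := hbr
  have hr0 : (0:ℝ) ≤ r := le_trans hx0.1 hx0.2
  have hsub : Icc (0:ℝ) r ⊆ Icc 0 1 := Icc_subset_Icc le_rfl hr1
  have hgr : ContinuousOn g (Icc 0 r) := hg.mono hsub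
  obtain ⟨xm, hxm, hmax⟩ := isCompact_Icc.exists_isMaxOn (⟨x0, hx0⟩ : (Icc (0:ℝ) r).Nonempty) hgr
  have hmax' : ∀ z ∈ Icc 0 r, g z ≤ g xm := fun z hz => hmax hz
  have hbM : b ≤ g xm := le_trans hbx0 (hmax' x0 hx0)
  set S : Set ℝ := Icc 0 r ∩ g ⁻¹' {g xm} with hS
  have hSne : S.Nonempty := ⟨xm, hxm, rfl⟩
  have hScl : IsClosed S := hgr.preimage_isClosed_of_isClosed isClosed_Icc isClosed_singleton
  have hSbdd : BddBelow S := ⟨0, fun z hz => hz.1.1⟩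
  set xs := sInf S with hxs
  have hxsS : xs ∈ S := hScl.csInf_mem hSne hSbdd
  have hgxs : g xs = g xm := hxsS.2
  have hxs0 : 0 < xs := by
    rcases lt_or_eq_of_le hxsS.1.1 with h | h
    · exact h
    · exfalso
      rw [← h, hg0] at hgxs
      linarith
  have hxsr : xs ≤ r := hxsS.1.2
  have hdep : Departure g xs := by
    refine ⟨hxs0, le_trans hxsr hr1, ?_⟩
    rintro ⟨w, hw, hw2⟩
    have hwS : w ∈ S := ⟨⟨hw.1, le_trans (le_of_lt hw.2) hxsr⟩, by
      rw [mem_preimage, mem_singleton_iff, hw2, hgxs]⟩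
    have hle := csInf_le hSbdd hwS
    rw [← hxs] at hle
    linarith [hw.2]
  refine ⟨xs, hdep, hxs0, hxsr, by rw [hgxs]; exact hbM,
    fun z hz => by rw [hgxs]; exact hmax' z hz, ?_⟩
  intro z hzdep hxz
  by_contra hcon
  push_neg at hcon
  obtain ⟨h1, h2⟩ := hcon
  have hmem : g z ∈ g '' Icc 0 xs := by
    apply intermediate_value_Icc (le_of_lt hxs0) (hg.mono (Icc_subset_Icc le_rfl (le_trans hxsr hr1)))
    rw [hg0]
    exact ⟨h1, h2⟩
  obtain ⟨w, hw, hww⟩ := hmem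
  exact hzdep.2.2 ⟨w, ⟨hw.1, lt_of_le_of_lt hw.2 hxz⟩, hww⟩
lemma exit_up {g t : ℝ → ℝ} (hg : ContinuousOn g (Icc 0 1)) (hg0 : g 0 = 0)
    (hcf : IsContourFactor g t) {a b e : ℝ} (ha : a < 0) (hb : 0 < b)
    (he0 : 0 < e) (he1 : e ≤ 1) (hge : g e = b) (hbef : ∀ s ∈ Ico 0 e, g s ∈ Ioo a b) :
    ∃ e', 0 < e' ∧ t e' = b ∧ ∀ y ∈ Ico 0 e', t y ∈ Ioo a b := by
  classical
  obtain ⟨n, hn, α, hα0, hαm, hcp, hval, hlin⟩ := hcf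
  have hmono : ∀ i j, i < j → j ≤ n → α i < α j := fun i j => seq_strict hαm i j
  -- Existence of a contour value outside the window
  have hex : ∃ i, i ≤ n ∧ g (α i) ∉ Ioo a b := by
    obtain ⟨xs, hdep, hxs0, hxs1, hbxs, hmax, hdich⟩ :=
      first_max_departure hg hg0 (le_refl (1:ℝ)) hb ⟨e, ⟨le_of_lt he0, he1⟩, hge.ge⟩
    have hcpx : ContourPoint g xs := by
      refine ⟨hdep, fun z hz hxz => ⟨z, hz, hxz, le_refl z, ?_⟩⟩
      rcases hdich z hz hxz with h | h
      · exact mul_neg_of_pos_of_neg (lt_of_lt_of_le hb hbxs) h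
      · exact absurd (hmax z ⟨le_of_lt hz.1, hz.2.1⟩) (not_le.mpr h)
    obtain ⟨i, hi1, hin, hxi⟩ := (hcp xs).mp hcpx
    refine ⟨i, hin, fun hio => ?_⟩
    have : b ≤ g (α i) := by rw [← hxi]; exact hbxs
    linarith [hio.2]
  set i₀ := Nat.find hex with hi₀def
  obtain ⟨hi₀n, hi₀out⟩ : i₀ ≤ n ∧ g (α i₀) ∉ Ioo a b := Nat.find_spec hex
  have hmin : ∀ j, j < i₀ → j ≤ n → g (α j) ∈ Ioo a b := by
    intro j hj hjn
    have h := Nat.find_min hex hj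
    push_neg at h
    exact h hjn
  have hi₀pos : 0 < i₀ := by
    rcases Nat.eq_zero_or_pos i₀ with h | h
    · exfalso
      apply hi₀out
      rw [h, hα0, hg0]
      exact ⟨ha, hb⟩
    · exact h
  have hcpi₀ : ContourPoint g (α i₀) := (hcp (α i₀)).mpr ⟨i₀, hi₀pos, hi₀n, rfl⟩
  have hdepi₀ : Departure g (α i₀) := hcpi₀.1
  have hvcases : g (α i₀) ≤ a ∨ b ≤ g (α i₀) := by
    rcases le_or_gt b (g (α i₀)) with h | h
    · right; exact h
    · left
      by_contra hh
      push_neg at hh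
      exact hi₀out ⟨hh, h⟩
  rcases hvcases with hva | hvb
  · -- impossible: the first contour value outside the window cannot be below
    exfalso
    have hαe : e < α i₀ := by
      rcases lt_or_ge e (α i₀) with h | h
      · exact h
      · exfalso
        rcases lt_or_eq_of_le h with h' | h'
        · have := hbef (α i₀) ⟨le_of_lt hdepi₀.1, h'⟩
          linarith [this.1]
        · have : g (α i₀) = b := by rw [h', hge]
          linarith
    obtain ⟨xs, hdep, hxs0, hxsr, hbxs, hmax, hdich⟩ :=
      first_max_departure hg hg0 hdepi₀.2.1 hb ⟨e, ⟨le_of_lt he0, le_of_lt hαe⟩, hge.ge⟩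
    have hxslt : xs < α i₀ := by
      rcases lt_or_eq_of_le hxsr with h | h
      · exact h
      · exfalso; rw [h] at hbxs; linarith
    have hnotcp : ¬ ContourPoint g xs := by
      intro hcpx
      obtain ⟨j, hj1, hjn, hxj⟩ := (hcp xs).mp hcpx
      have hji : j < i₀ := by
        by_contra hh
        push_neg at hh
        have hle : α i₀ ≤ α j := by
          rcases lt_or_eq_of_le hh with h' | h'
          · exact le_of_lt (hmono i₀ j h' hjn)
          · rw [h']
        rw [← hxj] at hle
        linarith
      have hjin := hmin j hji hjn
      rw [← hxj] at hjin
      linarith [hjin.2]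
    unfold ContourPoint at hnotcp
    push_neg at hnotcp
    obtain ⟨z, hzdep, hxz, hz⟩ := hnotcp hdep
    have hgxs : 0 < g xs := lt_of_lt_of_le hb hbxs
    have hgz : 0 < g z := by
      have h1 := hz z hzdep hxz (le_refl z)
      have hzne : g z ≠ 0 := by
        intro h0
        exact hzdep.2.2 ⟨0, ⟨le_refl (0:ℝ), hzdep.1⟩, by rw [hg0, h0]⟩
      rcases lt_trichotomy (g z) 0 with h | h | h
      · nlinarith
      · exact absurd h hzne
      · exact h
    have hgzM : g xs < g z := by
      rcases hdich z hzdep hxz with h | h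
      · linarith
      · exact h
    have hzr : α i₀ < z := by
      by_contra hh
      push_neg at hh
      have := hmax z ⟨le_of_lt hzdep.1, hh⟩
      linarith
    have hprod := hz (α i₀) hdepi₀ hxslt (le_of_lt hzr)
    nlinarith
  · -- construct the exit point of t
    obtain ⟨k, hk⟩ : ∃ k, i₀ = k + 1 := ⟨i₀ - 1, (Nat.succ_pred_eq_of_pos hi₀pos).symm⟩
    have hklt : k < n := by omega
    have hnR : (0:ℝ) < (n:ℝ) := by exact_mod_cast hn
    have hsegd : ((k:ℝ)+1)/(n:ℝ) - (k:ℝ)/(n:ℝ) = 1/(n:ℝ) := by field_simp; ring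
    have hABlt : (k:ℝ)/(n:ℝ) < ((k:ℝ)+1)/(n:ℝ) := by
      have h1n : (0:ℝ) < 1/(n:ℝ) := by positivity
      linarith
    have htA : t ((k:ℝ)/(n:ℝ)) = g (α k) := hval k (by omega)
    have htB : t (((k:ℝ)+1)/(n:ℝ)) = g (α i₀) := by
      have h := hval (k+1) (by omega)
      push_cast at h
      rw [← hk] at h
      exact h
    have hvA := hmin k (by omega) (by omega)
    obtain ⟨e', he'A, he'B, hte', hseg⟩ :=
      segment_exit hABlt (hlin k hklt) htA htB hvA.1 hvA.2 hvb
    have hA0 : (0:ℝ) ≤ (k:ℝ)/(n:ℝ) := by positivity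
    refine ⟨e', lt_of_le_of_lt hA0 he'A, hte', ?_⟩
    intro y hy
    rcases le_or_gt ((k:ℝ)/(n:ℝ)) y with hyA | hyA
    · exact hseg y ⟨hyA, hy.2⟩
    · set j := Nat.floor (y * (n:ℝ)) with hjdef
      have hy0 : (0:ℝ) ≤ y := hy.1
      have hyn0 : (0:ℝ) ≤ y * (n:ℝ) := by positivity
      have hj1 : (j:ℝ) ≤ y * (n:ℝ) := Nat.floor_le hyn0
      have hj2 : y * (n:ℝ) < (j:ℝ) + 1 := Nat.lt_floor_add_one _
      have hjk : j < k := by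
        have hyk : y * (n:ℝ) < (k:ℝ) := by
          rw [div_eq_mul_inv] at hyA
          calc y * (n:ℝ) < (k:ℝ)/(n:ℝ) * (n:ℝ) := by
                apply mul_lt_mul_of_pos_right _ hnR
                rw [div_eq_mul_inv]
                exact hyA
            _ = (k:ℝ) := by field_simp
        exact_mod_cast lt_of_le_of_lt hj1 hyk
      have hjlt : j < n := by omega
      have hylo : (j:ℝ)/(n:ℝ) ≤ y := by
        rw [div_le_iff₀ hnR]
        exact hj1
      have hyhi : y ≤ ((j:ℝ)+1)/(n:ℝ) := by
        rw [le_div_iff₀ hnR]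
        linarith
      have hsegd2 : ((j:ℝ)+1)/(n:ℝ) - (j:ℝ)/(n:ℝ) = 1/(n:ℝ) := by field_simp; ring
      have hAB2 : (j:ℝ)/(n:ℝ) < ((j:ℝ)+1)/(n:ℝ) := by
        have h1n : (0:ℝ) < 1/(n:ℝ) := by positivity
        linarith
      have htj : t ((j:ℝ)/(n:ℝ)) = g (α j) := hval j (by omega)
      have htj1 : t (((j:ℝ)+1)/(n:ℝ)) = g (α (j+1)) := by
        have h := hval (j+1) (by omega)
        push_cast at h
        exact h
      exact segment_inside hAB2 (hlin j hjlt) htj htj1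
        (hmin j (by omega) (by omega)) (hmin (j+1) (by omega) (by omega)) y ⟨hylo, hyhi⟩

lemma clash {g₁ g₂ t : ℝ → ℝ} (h₁ : ContinuousOn g₁ (Icc 0 1)) (h₂ : ContinuousOn g₂ (Icc 0 1))
    (hg₁0 : g₁ 0 = 0) (hg₂0 : g₂ 0 = 0)
    (hcf₁ : IsContourFactor g₁ t) (hcf₂ : IsContourFactor g₂ t)
    {a b e₁ e₂ : ℝ} (ha : a < 0) (hb : 0 < b)
    (he₁ : 0 < e₁) (he₁' : e₁ ≤ 1) (hv₁ : g₁ e₁ = b) (hs₁ : ∀ s ∈ Ico 0 e₁, g₁ s ∈ Ioo a b)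
    (he₂ : 0 < e₂) (he₂' : e₂ ≤ 1) (hv₂ : g₂ e₂ = a) (hs₂ : ∀ s ∈ Ico 0 e₂, g₂ s ∈ Ioo a b) :
    False := by
  obtain ⟨p, hp0, hpb, hpsub⟩ := exit_up h₁ hg₁0 hcf₁ ha hb he₁ he₁' hv₁ hs₁
  have hG0 : (fun y => - g₂ y) 0 = 0 := by simp [hg₂0]
  have hGv : (fun y => - g₂ y) e₂ = -a := by simp [hv₂]
  have hGs : ∀ s ∈ Ico 0 e₂, (fun y => - g₂ y) s ∈ Ioo (-b) (-a) := by
    intro s hs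
    have h := hs₂ s hs
    exact ⟨by simp; linarith [h.2], by simp; linarith [h.1]⟩
  obtain ⟨q, hq0, hqa', hqsub'⟩ :=
    exit_up h₂.neg hG0 hcf₂.neg (by linarith : -b < 0) (by linarith : 0 < -a)
      he₂ he₂' hGv hGs
  have hqa : t q = a := by
    have := hqa'
    linarith
  have hqsub : ∀ y ∈ Ico 0 q, t y ∈ Ioo a b := by
    intro y hy
    have h := hqsub' y hy
    simp only [mem_Ioo] at h
    exact ⟨by linarith [h.2], by linarith [h.1]⟩
  rcases lt_trichotomy p q with h | h | h
  · have := hqsub p ⟨le_of_lt hp0, h⟩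
    rw [hpb] at this
    linarith [this.2]
  · rw [h, hqa] at hpb
    linarith
  · have := hpsub q ⟨le_of_lt hq0, h⟩
    rw [hqa] at this
    linarith [this.1]

theorem stmt15 (f₁ f₂ : ℝ → ℝ) (hpl1 : PiecewiseLinear f₁) (hpl2 : PiecewiseLinear f₂)
    (h10 : f₁ 0 = 0) (h20 : f₂ 0 = 0)
    (hmap2 : MapsTo f₂ (Icc (-1:ℝ) 1) (Icc (-1:ℝ) 1))
    (hnc1 : NonConstSides f₁) (hnc2 : NonConstSides f₂) (hnc12 : NonConstSides (f₁ ∘ f₂))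
    (hsame : ∃ t, IsRadialContourFactor f₁ t ∧ IsRadialContourFactor (f₁ ∘ f₂) t)
    (x₁ x₂ : ℝ) (hneg : NegRD f₂ x₁ x₂) :
    (∀ y₁ y₂, RadialDeparture f₁ y₁ y₂ →
      (f₂ x₂ < y₁ ∧ y₁ < 0 ∧ 0 < y₂ ∧ y₂ < f₂ x₁) ∨
      (y₁ < f₂ x₂ ∧ f₂ x₂ < 0 ∧ 0 < f₂ x₁ ∧ f₂ x₁ < y₂)) ∧
    ¬ RadialDeparture f₁ (f₂ x₂) (f₂ x₁) := by
  classical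
  obtain ⟨t, ⟨hcf1R, hcf1L⟩, hcf12R, hcf12L⟩ := hsame
  obtain ⟨hx₁m, hx₁, hx₂, hx₂1, himg⟩ := hneg
  have hc1 : ContinuousOn f₁ (Icc (-1) 1) := hpl1.continuousOn
  have hc2 : ContinuousOn f₂ (Icc (-1) 1) := hpl2.continuousOn
  have hsub01 : Icc (0:ℝ) 1 ⊆ Icc (-1:ℝ) 1 := Icc_subset_Icc (by norm_num) le_rfl
  have hc1R : ContinuousOn f₁ (Icc 0 1) := hc1.mono hsub01
  have hcH : ContinuousOn (f₁ ∘ f₂) (Icc (-1) 1) := hc1.comp hc2 hmap2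
  have hcHR : ContinuousOn (f₁ ∘ f₂) (Icc 0 1) := hcH.mono hsub01
  have hnegmaps : MapsTo (fun x : ℝ => -x) (Icc (0:ℝ) 1) (Icc (-1:ℝ) 1) := by
    intro x hx
    simp only [mem_Icc] at hx ⊢
    constructor <;> linarith
  have hc1L : ContinuousOn (fun x => f₁ (-x)) (Icc 0 1) :=
    hc1.comp continuous_neg.continuousOn hnegmaps
  have hcHL : ContinuousOn (fun x => (f₁ ∘ f₂) (-x)) (Icc 0 1) :=
    hcH.comp continuous_neg.continuousOn hnegmaps
  have hH0 : (f₁ ∘ f₂) 0 = 0 := by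
    show f₁ (f₂ 0) = 0
    rw [h20, h10]
  have h1L0 : (fun x => f₁ (-x)) 0 = 0 := by simp [h10]
  have hHL0 : (fun x => (f₁ ∘ f₂) (-x)) 0 = 0 := by
    simp only [neg_zero]
    exact hH0
  have hpq : f₂ x₂ < 0 ∧ 0 < f₂ x₁ := by
    have h0 : (0:ℝ) ∈ Ioo (f₂ x₂) (f₂ x₁) := by
      rw [← himg]
      exact ⟨0, ⟨hx₁, hx₂⟩, h20⟩
    exact ⟨h0.1, h0.2⟩
  have hinner : ∀ s, x₁ < s → s < x₂ → f₂ s ∈ Ioo (f₂ x₂) (f₂ x₁) := by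
    intro s hs1 hs2
    rw [← himg]
    exact ⟨s, ⟨hs1, hs2⟩, rfl⟩
  have main : ∀ y₁ y₂, RadialDeparture f₁ y₁ y₂ →
      (f₂ x₂ < y₁ ∧ y₁ < 0 ∧ 0 < y₂ ∧ y₂ < f₂ x₁) ∨
      (y₁ < f₂ x₂ ∧ f₂ x₂ < 0 ∧ 0 < f₂ x₁ ∧ f₂ x₁ < y₂) := by
    intro y₁ y₂ hrd
    have hy : -1 ≤ y₁ ∧ y₁ < 0 ∧ 0 < y₂ ∧ y₂ ≤ 1 := by
      rcases hrd with h | h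
      · exact ⟨h.1, h.2.1, h.2.2.1, h.2.2.2.1⟩
      · exact ⟨h.1, h.2.1, h.2.2.1, h.2.2.2.1⟩
    obtain ⟨hy₁m, hy₁, hy₂, hy₂1⟩ := hy
    by_contra hcon
    have hcases : (y₁ ≤ f₂ x₂ ∧ y₂ ≤ f₂ x₁) ∨ (f₂ x₂ ≤ y₁ ∧ f₂ x₁ ≤ y₂) := by
      rcases le_or_gt y₁ (f₂ x₂) with h1 | h1
      · rcases le_or_gt y₂ (f₂ x₁) with h2 | h2
        · exact Or.inl ⟨h1, h2⟩
        · rcases lt_or_eq_of_le h1 with h1' | h1'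
          · exact absurd (Or.inr ⟨h1', hpq.1, hpq.2, h2⟩) hcon
          · exact Or.inr ⟨le_of_eq h1'.symm, le_of_lt h2⟩
      · rcases le_or_gt (f₂ x₁) y₂ with h2 | h2
        · exact Or.inr ⟨le_of_lt h1, h2⟩
        · exact absurd (Or.inl ⟨h1, hy₁, hy₂, h2⟩) hcon
    rcases hcases with ⟨ha1, ha2⟩ | ⟨hb1, hb2⟩
    · -- Case (a): y₁ ≤ f₂ x₂ and y₂ ≤ f₂ x₁ : use the left sides
      have hcont2 : ContinuousOn f₂ (Icc x₁ 0) :=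
        hc2.mono (Icc_subset_Icc hx₁m (by norm_num))
      have hivt : y₂ ∈ f₂ '' Icc x₁ 0 := by
        apply intermediate_value_Icc' (le_of_lt hx₁) hcont2
        rw [h20]
        exact ⟨le_of_lt hy₂, ha2⟩
      obtain ⟨w0, hw0, hww0⟩ := hivt
      have hScl : IsClosed (Icc x₁ 0 ∩ f₂ ⁻¹' {y₂}) :=
        hcont2.preimage_isClosed_of_isClosed isClosed_Icc isClosed_singleton
      have hSbdd : BddAbove (Icc x₁ 0 ∩ f₂ ⁻¹' {y₂}) := ⟨0, fun z hz => hz.1.2⟩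
      have huS : sSup (Icc x₁ 0 ∩ f₂ ⁻¹' {y₂}) ∈ Icc x₁ 0 ∩ f₂ ⁻¹' {y₂} :=
        hScl.csSup_mem ⟨w0, hw0, hww0⟩ hSbdd
      set u := sSup (Icc x₁ 0 ∩ f₂ ⁻¹' {y₂}) with hudef
      have hfu : f₂ u = y₂ := huS.2
      have hux₁ : x₁ ≤ u := huS.1.1
      have hu0 : u < 0 := by
        rcases lt_or_eq_of_le huS.1.2 with h | h
        · exact h
        · exfalso
          rw [h, h20] at hfu
          linarith
      have hbefore : ∀ s, u < s → s ≤ 0 → f₂ s ∈ Ioo y₁ y₂ := by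
        intro s hs1 hs2
        constructor
        · rcases lt_or_eq_of_le hs2 with h | h
          · have := hinner s (lt_of_le_of_lt hux₁ hs1) (lt_trans h hx₂)
            linarith [this.1]
          · rw [h, h20]
            exact hy₁
        · by_contra hh
          push_neg at hh
          have hsx₁ : x₁ < s := lt_of_le_of_lt hux₁ hs1
          have hivt2 : y₂ ∈ f₂ '' Icc s 0 := by
            apply intermediate_value_Icc' hs2
              (hcont2.mono (Icc_subset_Icc (le_of_lt hsx₁) le_rfl))
            rw [h20]
            exact ⟨le_of_lt hy₂, hh⟩
          obtain ⟨w, hw, hww⟩ := hivt2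
          have hwS : w ∈ Icc x₁ 0 ∩ f₂ ⁻¹' {y₂} :=
            ⟨⟨le_trans (le_of_lt hsx₁) hw.1, hw.2⟩, hww⟩
          have hle := le_csSup hSbdd hwS
          rw [← hudef] at hle
          linarith [hw.1]
      rcases hrd with ⟨_, _, _, _, himg1⟩ | ⟨_, _, _, _, himg1⟩
      · -- positive radial departure of f₁
        have hwin : ∀ s, y₁ < s → s < y₂ → f₁ s ∈ Ioo (f₁ y₁) (f₁ y₂) := by
          intro s h1 h2
          rw [← himg1]
          exact ⟨s, ⟨h1, h2⟩, rfl⟩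
        have hsign : f₁ y₁ < 0 ∧ 0 < f₁ y₂ := by
          have h0 : (0:ℝ) ∈ Ioo (f₁ y₁) (f₁ y₂) := by
            rw [← himg1]; exact ⟨0, ⟨hy₁, hy₂⟩, h10⟩
          exact ⟨h0.1, h0.2⟩
        refine clash hcHL hc1L hHL0 h1L0 hcf12L hcf1L hsign.1 hsign.2
          (e₁ := -u) (by linarith) (by linarith) ?_ ?_
          (e₂ := -y₁) (by linarith) (by linarith) ?_ ?_
        · show (f₁ ∘ f₂) (-(-u)) = f₁ y₂
          rw [neg_neg]
          show f₁ (f₂ u) = f₁ y₂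
          rw [hfu]
        · intro s hs
          have hmem := hbefore (-s) (by linarith [hs.2]) (by linarith [hs.1])
          exact hwin (f₂ (-s)) hmem.1 hmem.2
        · show f₁ (-(-y₁)) = f₁ y₁
          rw [neg_neg]
        · intro s hs
          exact hwin (-s) (by linarith [hs.2]) (by linarith [hs.1, hy₂])
      · -- negative radial departure of f₁
        have hwin : ∀ s, y₁ < s → s < y₂ → f₁ s ∈ Ioo (f₁ y₂) (f₁ y₁) := by
          intro s h1 h2
          rw [← himg1]
          exact ⟨s, ⟨h1, h2⟩, rfl⟩
        have hsign : f₁ y₂ < 0 ∧ 0 < f₁ y₁ := by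
          have h0 : (0:ℝ) ∈ Ioo (f₁ y₂) (f₁ y₁) := by
            rw [← himg1]; exact ⟨0, ⟨hy₁, hy₂⟩, h10⟩
          exact ⟨h0.1, h0.2⟩
        refine clash hc1L hcHL h1L0 hHL0 hcf1L hcf12L hsign.1 hsign.2
          (e₁ := -y₁) (by linarith) (by linarith) ?_ ?_
          (e₂ := -u) (by linarith) (by linarith) ?_ ?_
        · show f₁ (-(-y₁)) = f₁ y₁
          rw [neg_neg]
        · intro s hs
          exact hwin (-s) (by linarith [hs.2]) (by linarith [hs.1, hy₂])
        · show (f₁ ∘ f₂) (-(-u)) = f₁ y₂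
          rw [neg_neg]
          show f₁ (f₂ u) = f₁ y₂
          rw [hfu]
        · intro s hs
          have hmem := hbefore (-s) (by linarith [hs.2]) (by linarith [hs.1])
          exact hwin (f₂ (-s)) hmem.1 hmem.2
    · -- Case (b): f₂ x₂ ≤ y₁ and f₂ x₁ ≤ y₂ : use the right sides
      have hcont2 : ContinuousOn f₂ (Icc 0 x₂) :=
        hc2.mono (Icc_subset_Icc (by norm_num) hx₂1)
      have hivt : y₁ ∈ f₂ '' Icc 0 x₂ := by
        apply intermediate_value_Icc' (le_of_lt hx₂) hcont2
        rw [h20]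
        exact ⟨hb1, le_of_lt hy₁⟩
      obtain ⟨w0, hw0, hww0⟩ := hivt
      have hScl : IsClosed (Icc 0 x₂ ∩ f₂ ⁻¹' {y₁}) :=
        hcont2.preimage_isClosed_of_isClosed isClosed_Icc isClosed_singleton
      have hSbdd : BddBelow (Icc 0 x₂ ∩ f₂ ⁻¹' {y₁}) := ⟨0, fun z hz => hz.1.1⟩
      have huS : sInf (Icc 0 x₂ ∩ f₂ ⁻¹' {y₁}) ∈ Icc 0 x₂ ∩ f₂ ⁻¹' {y₁} :=
        hScl.csInf_mem ⟨w0, hw0, hww0⟩ hSbdd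
      set u := sInf (Icc 0 x₂ ∩ f₂ ⁻¹' {y₁}) with hudef
      have hfu : f₂ u = y₁ := huS.2
      have hux₂ : u ≤ x₂ := huS.1.2
      have hu0 : 0 < u := by
        rcases lt_or_eq_of_le huS.1.1 with h | h
        · exact h
        · exfalso
          rw [← h, h20] at hfu
          linarith
      have hbefore : ∀ s, 0 ≤ s → s < u → f₂ s ∈ Ioo y₁ y₂ := by
        intro s hs1 hs2
        constructor
        · by_contra hh
          push_neg at hh
          have hivt2 : y₁ ∈ f₂ '' Icc 0 s := by
            apply intermediate_value_Icc' hs1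
              (hcont2.mono (Icc_subset_Icc le_rfl (le_trans (le_of_lt hs2) hux₂)))
            rw [h20]
            exact ⟨hh, le_of_lt hy₁⟩
          obtain ⟨w, hw, hww⟩ := hivt2
          have hwS : w ∈ Icc 0 x₂ ∩ f₂ ⁻¹' {y₁} :=
            ⟨⟨hw.1, le_trans hw.2 (le_trans (le_of_lt hs2) hux₂)⟩, hww⟩
          have hle := csInf_le hSbdd hwS
          rw [← hudef] at hle
          linarith [hw.2]
        · rcases lt_or_eq_of_le hs1 with h | h
          · have := hinner s (lt_trans hx₁ h) (lt_of_lt_of_le hs2 hux₂)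
            linarith [this.2]
          · rw [← h, h20]
            exact hy₂
      rcases hrd with ⟨_, _, _, _, himg1⟩ | ⟨_, _, _, _, himg1⟩
      · -- positive radial departure of f₁
        have hwin : ∀ s, y₁ < s → s < y₂ → f₁ s ∈ Ioo (f₁ y₁) (f₁ y₂) := by
          intro s h1 h2
          rw [← himg1]
          exact ⟨s, ⟨h1, h2⟩, rfl⟩
        have hsign : f₁ y₁ < 0 ∧ 0 < f₁ y₂ := by
          have h0 : (0:ℝ) ∈ Ioo (f₁ y₁) (f₁ y₂) := by
            rw [← himg1]; exact ⟨0, ⟨hy₁, hy₂⟩, h10⟩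
          exact ⟨h0.1, h0.2⟩
        refine clash hc1R hcHR h10 hH0 hcf1R hcf12R hsign.1 hsign.2
          (e₁ := y₂) hy₂ hy₂1 rfl ?_
          (e₂ := u) hu0 (le_trans hux₂ hx₂1) ?_ ?_
        · intro s hs
          exact hwin s (by linarith [hs.1]) hs.2
        · show f₁ (f₂ u) = f₁ y₁
          rw [hfu]
        · intro s hs
          have hmem := hbefore s hs.1 hs.2
          exact hwin (f₂ s) hmem.1 hmem.2
      · -- negative radial departure of f₁
        have hwin : ∀ s, y₁ < s → s < y₂ → f₁ s ∈ Ioo (f₁ y₂) (f₁ y₁) := by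
          intro s h1 h2
          rw [← himg1]
          exact ⟨s, ⟨h1, h2⟩, rfl⟩
        have hsign : f₁ y₂ < 0 ∧ 0 < f₁ y₁ := by
          have h0 : (0:ℝ) ∈ Ioo (f₁ y₂) (f₁ y₁) := by
            rw [← himg1]; exact ⟨0, ⟨hy₁, hy₂⟩, h10⟩
          exact ⟨h0.1, h0.2⟩
        refine clash hcHR hc1R hH0 h10 hcf12R hcf1R hsign.1 hsign.2
          (e₁ := u) hu0 (le_trans hux₂ hx₂1) ?_ ?_
          (e₂ := y₂) hy₂ hy₂1 rfl ?_
        · show f₁ (f₂ u) = f₁ y₁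
          rw [hfu]
        · intro s hs
          have hmem := hbefore s hs.1 hs.2
          exact hwin (f₂ s) hmem.1 hmem.2
        · intro s hs
          exact hwin s (by linarith [hs.1]) hs.2
  refine ⟨main, fun hrd => ?_⟩
  rcases main (f₂ x₂) (f₂ x₁) hrd with h | h
  · exact absurd h.1 (lt_irrefl _)
  · exact absurd h.1 (lt_irrefl _)
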